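/- Let d ≥ 1 be an integer and let p : ℝ × ℝ^d → ℝ and u : ℝ × ℝ^d → ℝ^d be continuously differentiable with p(t,x) > 0 everywhere. If (p,u) is a classical solution of the ultra-relativistic Euler equations, i.e. ∂_t W_α(p,u) + Σ_{k=1}^d ∂_{x_k} F_k^{(α)}(p,u) = 0 pointwise for every α = 1,…,d+1, then the entropy is conserved: ∂_t η(p,u) + Σ_{k=1}^d ∂_{x_k} q_k(p,u) = 0 pointwise. -/

import Mathlib

open Real Finset

/-- Conservative variables `W(p,u)` of the ultra-relativistic Euler equations. -/
noncomputable def consVars (d : ℕ) (p : ℝ) (u : Fin d → ℝ) : Fin (d + 1) → ℝ :=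
  Fin.snoc (fun j => 4 * p * u j * Real.sqrt (1 + ∑ i, u i ^ 2))
    (p * (3 + 4 * ∑ i, u i ^ 2))

/-- Exact fluxes `F_k` of the ultra-relativistic Euler equations. -/
noncomputable def flux (d : ℕ) (k : Fin d) (p : ℝ) (u : Fin d → ℝ) : Fin (d + 1) → ℝ :=
  Fin.snoc (fun i => p * (if i = k then 1 else 0) + 4 * p * u i * u k)
    (4 * p * u k * Real.sqrt (1 + ∑ j, u j ^ 2))

/-- Entropy `η(p,u) = p^{3/4} √(1+|u|²)`. -/
noncomputable def entropy (d : ℕ) (p : ℝ) (u : Fin d → ℝ) : ℝ :=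
  p ^ ((3 : ℝ) / 4) * Real.sqrt (1 + ∑ j, u j ^ 2)

/-- Entropy fluxes `q_k(p,u) = p^{3/4} u_k`. -/
noncomputable def entropyFlux (d : ℕ) (k : Fin d) (p : ℝ) (u : Fin d → ℝ) : ℝ :=
  p ^ ((3 : ℝ) / 4) * u k

/-!
Write `r = p^{-1/4}` and `s = √(1+|u|²)`. The entropy variables
`v = (r/4) (-u, s)` are the gradient of `η` with respect to the conservative variables:
along any C¹ curve `dη = v · dW` and `dq_k = v · dF_k`, which is a polynomial identity once
`p^{3/4} = r p` and `s² = 1 + |u|²` are used. Contracting the balance laws with `v` therefore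
gives `∂_t η + Σ_k ∂_{x_k} q_k = v · (∂_t W + Σ_k ∂_{x_k} F_k) = 0`.
-/

lemma sum_mul_add_mul {ι : Type*} [Fintype ι] (u w : ι → ℝ) (a b : ℝ) :
    ∑ j, u j * (a * u j + b * w j) = a * ∑ j, u j ^ 2 + b * ∑ j, u j * w j := by
  simp only [mul_sum, ← sum_add_distrib]
  exact sum_congr rfl fun j _ => by ring

lemma sum_mul_ite_add {ι : Type*} [Fintype ι] [DecidableEq ι] (u f : ι → ℝ) (k : ι)
    (c : ℝ) :
    ∑ j, u j * (c * (if j = k then 1 else 0) + f j) = c * u k + ∑ j, u j * f j := by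
  simp [mul_add, sum_add_distrib, mul_comm]

lemma rpow_three_div_four_eq {p : ℝ} (hp : 0 < p) :
    p ^ ((3 : ℝ) / 4) = p ^ (-(1 : ℝ) / 4) * p := by
  rw [← rpow_add_one hp.ne']
  norm_num

section CurveDerivatives

variable {d : ℕ} {P : ℝ → ℝ} {U : ℝ → Fin d → ℝ} {t A : ℝ} {B : Fin d → ℝ}

lemma hasDerivAt_sum_sq (hU : ∀ i, HasDerivAt (fun τ => U τ i) (B i) t) :
    HasDerivAt (fun τ => ∑ i, U τ i ^ 2) (2 * ∑ i, U t i * B i) t := by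
  refine (HasDerivAt.fun_sum fun i _ => (hU i).fun_pow 2).congr_deriv ?_
  rw [mul_sum]
  exact sum_congr rfl fun i _ => by ring

lemma hasDerivAt_sqrt_one_add_sum_sq (hU : ∀ i, HasDerivAt (fun τ => U τ i) (B i) t) :
    HasDerivAt (fun τ => √(1 + ∑ i, U τ i ^ 2))
      ((∑ i, U t i * B i) / √(1 + ∑ i, U t i ^ 2)) t := by
  have hpos : 0 < 1 + ∑ i, U t i ^ 2 := by positivity
  refine (((hasDerivAt_sum_sq hU).const_add 1).sqrt hpos.ne').congr_deriv ?_
  field_simp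

lemma hasDerivAt_rpow_three_div_four (hP : HasDerivAt P A t) (hpos : 0 < P t) :
    HasDerivAt (fun τ => P τ ^ ((3 : ℝ) / 4)) (3 / 4 * P t ^ (-(1 : ℝ) / 4) * A) t := by
  convert hP.rpow_const (p := (3 : ℝ) / 4) (Or.inl hpos.ne') using 1
  norm_num
  ring

lemma hasDerivAt_entropy (hP : HasDerivAt P A t) (hU : ∀ i, HasDerivAt (fun τ => U τ i) (B i) t)
    (hpos : 0 < P t) :
    HasDerivAt (fun τ => entropy d (P τ) (U τ))
      (3 / 4 * P t ^ (-(1 : ℝ) / 4) * √(1 + ∑ i, U t i ^ 2) * A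
        + P t ^ ((3 : ℝ) / 4) * (∑ i, U t i * B i) / √(1 + ∑ i, U t i ^ 2)) t :=
  ((hasDerivAt_rpow_three_div_four hP hpos).fun_mul
    (hasDerivAt_sqrt_one_add_sum_sq hU)).congr_deriv (by ring)

lemma hasDerivAt_entropyFlux (k : Fin d) (hP : HasDerivAt P A t)
    (hU : ∀ i, HasDerivAt (fun τ => U τ i) (B i) t) (hpos : 0 < P t) :
    HasDerivAt (fun τ => entropyFlux d k (P τ) (U τ))
      (3 / 4 * P t ^ (-(1 : ℝ) / 4) * U t k * A + P t ^ ((3 : ℝ) / 4) * B k) t :=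
  ((hasDerivAt_rpow_three_div_four hP hpos).fun_mul (hU k)).congr_deriv (by ring)

lemma hasDerivAt_consVars_castSucc (j : Fin d) (hP : HasDerivAt P A t)
    (hU : ∀ i, HasDerivAt (fun τ => U τ i) (B i) t) :
    HasDerivAt (fun τ => consVars d (P τ) (U τ) j.castSucc)
      (4 * (A * √(1 + ∑ i, U t i ^ 2) + P t * (∑ i, U t i * B i) / √(1 + ∑ i, U t i ^ 2))
          * U t j + 4 * P t * √(1 + ∑ i, U t i ^ 2) * B j) t := by
  simp only [consVars, Fin.snoc_castSucc]
  exact (((hP.const_mul 4).fun_mul (hU j)).fun_mul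
    (hasDerivAt_sqrt_one_add_sum_sq hU)).congr_deriv (by ring)

lemma hasDerivAt_consVars_last (hP : HasDerivAt P A t)
    (hU : ∀ i, HasDerivAt (fun τ => U τ i) (B i) t) :
    HasDerivAt (fun τ => consVars d (P τ) (U τ) (Fin.last d))
      (A * (3 + 4 * ∑ i, U t i ^ 2) + 8 * P t * ∑ i, U t i * B i) t := by
  simp only [consVars, Fin.snoc_last]
  exact (hP.fun_mul (((hasDerivAt_sum_sq hU).const_mul 4).const_add 3)).congr_deriv (by ring)

lemma hasDerivAt_flux_castSucc (k j : Fin d) (hP : HasDerivAt P A t)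
    (hU : ∀ i, HasDerivAt (fun τ => U τ i) (B i) t) :
    HasDerivAt (fun τ => flux d k (P τ) (U τ) j.castSucc)
      (A * (if j = k then 1 else 0)
        + ((4 * A * U t k + 4 * P t * B k) * U t j + 4 * P t * U t k * B j)) t := by
  simp only [flux, Fin.snoc_castSucc]
  exact ((hP.mul_const _).fun_add (((hP.const_mul 4).fun_mul (hU j)).fun_mul (hU k))).congr_deriv
    (by ring)

lemma hasDerivAt_flux_last (k : Fin d) (hP : HasDerivAt P A t)
    (hU : ∀ i, HasDerivAt (fun τ => U τ i) (B i) t) :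
    HasDerivAt (fun τ => flux d k (P τ) (U τ) (Fin.last d))
      (4 * (A * U t k * √(1 + ∑ i, U t i ^ 2) + P t * B k * √(1 + ∑ i, U t i ^ 2)
        + P t * U t k * (∑ i, U t i * B i) / √(1 + ∑ i, U t i ^ 2))) t := by
  simp only [flux, Fin.snoc_last]
  exact (((hP.const_mul 4).fun_mul (hU k)).fun_mul
    (hasDerivAt_sqrt_one_add_sum_sq hU)).congr_deriv (by ring)

end CurveDerivatives

noncomputable def entropyVars (d : ℕ) (p : ℝ) (u : Fin d → ℝ) : Fin (d + 1) → ℝ :=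
  Fin.snoc (fun j => -(p ^ (-(1 : ℝ) / 4) * u j) / 4)
    (p ^ (-(1 : ℝ) / 4) * √(1 + ∑ i, u i ^ 2) / 4)

lemma sum_entropyVars_mul {d : ℕ} (p : ℝ) (u : Fin d → ℝ) (w : Fin (d + 1) → ℝ) :
    ∑ α, entropyVars d p u α * w α =
      p ^ (-(1 : ℝ) / 4) / 4 *
        (√(1 + ∑ i, u i ^ 2) * w (Fin.last d) - ∑ j, u j * w j.castSucc) := by
  rw [Fin.sum_univ_castSucc, mul_sub, mul_sum, sub_eq_neg_add, ← sum_neg_distrib]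
  simp only [entropyVars, Fin.snoc_castSucc, Fin.snoc_last]
  congr 1
  · exact sum_congr rfl fun j _ => by ring
  · ring

section EntropyVariables

variable {d : ℕ} {P : ℝ → ℝ} {U : ℝ → Fin d → ℝ} {t : ℝ}

theorem deriv_entropy_eq_sum_entropyVars_mul (hP : DifferentiableAt ℝ P t)
    (hU : DifferentiableAt ℝ U t) (hpos : 0 < P t) :
    deriv (fun τ => entropy d (P τ) (U τ)) t =
      ∑ α, entropyVars d (P t) (U t) α * deriv (fun τ => consVars d (P τ) (U τ) α) t := by
  obtain ⟨A, hA⟩ : ∃ A, HasDerivAt P A t := ⟨_, hP.hasDerivAt⟩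
  obtain ⟨B, hB⟩ : ∃ B : Fin d → ℝ, ∀ i, HasDerivAt (fun τ => U τ i) (B i) t :=
    ⟨_, fun i => (differentiableAt_pi.mp hU i).hasDerivAt⟩
  simp only [sum_entropyVars_mul, (hasDerivAt_consVars_last hA hB).deriv,
    fun j => (hasDerivAt_consVars_castSucc j hA hB).deriv]
  rw [sum_mul_add_mul, (hasDerivAt_entropy hA hB hpos).deriv, rpow_three_div_four_eq hpos]
  have hs : √(1 + ∑ i, U t i ^ 2) ^ 2 = 1 + ∑ i, U t i ^ 2 := sq_sqrt (by positivity)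
  have hs0 : √(1 + ∑ i, U t i ^ 2) ≠ 0 := by positivity
  field_simp
  rw [hs]
  ring

theorem deriv_entropyFlux_eq_sum_entropyVars_mul (k : Fin d) (hP : DifferentiableAt ℝ P t)
    (hU : DifferentiableAt ℝ U t) (hpos : 0 < P t) :
    deriv (fun τ => entropyFlux d k (P τ) (U τ)) t =
      ∑ α, entropyVars d (P t) (U t) α * deriv (fun τ => flux d k (P τ) (U τ) α) t := by
  obtain ⟨A, hA⟩ : ∃ A, HasDerivAt P A t := ⟨_, hP.hasDerivAt⟩
  obtain ⟨B, hB⟩ : ∃ B : Fin d → ℝ, ∀ i, HasDerivAt (fun τ => U τ i) (B i) t :=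
    ⟨_, fun i => (differentiableAt_pi.mp hU i).hasDerivAt⟩
  simp only [sum_entropyVars_mul, (hasDerivAt_flux_last k hA hB).deriv,
    fun j => (hasDerivAt_flux_castSucc k j hA hB).deriv]
  rw [sum_mul_ite_add, sum_mul_add_mul, (hasDerivAt_entropyFlux k hA hB hpos).deriv,
    rpow_three_div_four_eq hpos]
  have hs : √(1 + ∑ i, U t i ^ 2) ^ 2 = 1 + ∑ i, U t i ^ 2 := sq_sqrt (by positivity)
  have hs0 : √(1 + ∑ i, U t i ^ 2) ≠ 0 := by positivity
  field_simp
  rw [hs]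
  ring

end EntropyVariables

theorem classical_solution_entropy_conservation_general (d : ℕ)
    (p : ℝ × (Fin d → ℝ) → ℝ) (u : ℝ × (Fin d → ℝ) → Fin d → ℝ)
    (hp : ContDiff ℝ 1 p) (hu : ContDiff ℝ 1 u)
    (hpos : ∀ z, 0 < p z)
    (hsol : ∀ (t : ℝ) (x : Fin d → ℝ) (α : Fin (d + 1)),
      deriv (fun τ => consVars d (p (τ, x)) (u (τ, x)) α) t +
        ∑ k : Fin d,
          deriv (fun s => flux d k (p (t, Function.update x k s))
            (u (t, Function.update x k s)) α) (x k) = 0) :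
    ∀ (t : ℝ) (x : Fin d → ℝ),
      deriv (fun τ => entropy d (p (τ, x)) (u (τ, x))) t +
        ∑ k : Fin d,
          deriv (fun s => entropyFlux d k (p (t, Function.update x k s))
            (u (t, Function.update x k s))) (x k) = 0 := by
  intro t x
  have hp' := hp.differentiable one_ne_zero
  have hu' := hu.differentiable one_ne_zero
  have hupdate (k : Fin d) : Differentiable ℝ (Function.update x k) := fun s =>
    (hasDerivAt_update x k s).differentiableAt
  have hspace (k : Fin d) := deriv_entropyFlux_eq_sum_entropyVars_mul k (t := x k)
    (P := fun s => p (t, Function.update x k s)) (U := fun s => u (t, Function.update x k s))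
    (by fun_prop) (by fun_prop) (hpos _)
  simp only [Function.update_eq_self] at hspace
  rw [deriv_entropy_eq_sum_entropyVars_mul (by fun_prop) (by fun_prop) (hpos _),
    sum_congr rfl fun k _ => hspace k, sum_comm, ← sum_add_distrib]
  exact sum_eq_zero fun α _ => by rw [← mul_sum, ← mul_add, hsol t x α, mul_zero]

/-- Classical (C¹, positive-pressure) solutions of the ultra-relativistic Euler
equations conserve the entropy: `∂_t η + Σ_k ∂_{x_k} q_k = 0` pointwise. -/
theorem classical_solution_entropy_conservation (d : ℕ) (hd : 1 ≤ d)
    (p : ℝ × (Fin d → ℝ) → ℝ) (u : ℝ × (Fin d → ℝ) → Fin d → ℝ)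
    (hp : ContDiff ℝ 1 p) (hu : ContDiff ℝ 1 u)
    (hpos : ∀ z, 0 < p z)
    (hsol : ∀ (t : ℝ) (x : Fin d → ℝ) (α : Fin (d + 1)),
      deriv (fun τ => consVars d (p (τ, x)) (u (τ, x)) α) t +
        ∑ k : Fin d,
          deriv (fun s => flux d k (p (t, Function.update x k s))
            (u (t, Function.update x k s)) α) (x k) = 0) :
    ∀ (t : ℝ) (x : Fin d → ℝ),
      deriv (fun τ => entropy d (p (τ, x)) (u (τ, x))) t +
        ∑ k : Fin d,
          deriv (fun s => entropyFlux d k (p (t, Function.update x k s))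
            (u (t, Function.update x k s))) (x k) = 0 :=
  classical_solution_entropy_conservation_general d p u hp hu hpos hsol
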